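/- For well-tempered scoring games G and H: gap_0(G + H) ≤ gap_0(G) + gap_0(H), and gap_1(G + H) ≤ max(gap_1(G), gap_1(H)). -/

import Mathlib

/-- Well-tempered scoring game trees: an integer (final score) or a position
with lists of Left and Right options. -/
inductive WT : Type where
  | int : ℤ → WT
  | node : List WT → List WT → WT

namespace WT

/-- Left options. -/
def lopts : WT → List WT
  | int _ => []
  | node L _ => L

/-- Right options. -/
def ropts : WT → List WT
  | int _ => []
  | node _ R => R

theorem sizeOf_lt_of_mem_lopts : ∀ {G g : WT}, g ∈ G.lopts → sizeOf g < sizeOf G := by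
  intro G g h
  cases G with
  | int n => simp [lopts] at h
  | node L R =>
    simp only [lopts] at h
    have h1 := List.sizeOf_lt_of_mem h
    have h2 : sizeOf (WT.node L R) = 1 + sizeOf L + sizeOf R := by simp
    omega

theorem sizeOf_lt_of_mem_ropts : ∀ {G g : WT}, g ∈ G.ropts → sizeOf g < sizeOf G := by
  intro G g h
  cases G with
  | int n => simp [ropts] at h
  | node L R =>
    simp only [ropts] at h
    have h1 := List.sizeOf_lt_of_mem h
    have h2 : sizeOf (WT.node L R) = 1 + sizeOf L + sizeOf R := by simp
    omega

/-- Disjunctive sum of two games. -/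
def add (G H : WT) : WT :=
  match G, H with
  | int m, int n => int (m + n)
  | G, H =>
    node ((G.lopts.attach.map fun g => add g.1 H) ++ (H.lopts.attach.map fun h => add G h.1))
         ((G.ropts.attach.map fun g => add g.1 H) ++ (H.ropts.attach.map fun h => add G h.1))
termination_by sizeOf G + sizeOf H
decreasing_by
  all_goals
    first
      | (have := sizeOf_lt_of_mem_lopts g.2; omega)
      | (have := sizeOf_lt_of_mem_lopts h.2; omega)
      | (have := sizeOf_lt_of_mem_ropts g.2; omega)
      | (have := sizeOf_lt_of_mem_ropts h.2; omega)

/-- Negation of a game: swap players and negate scores. -/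
def neg : WT → WT
  | int n => int (-n)
  | node L R =>
    node ((WT.node L R).ropts.attach.map fun g => neg g.1)
         ((WT.node L R).lopts.attach.map fun g => neg g.1)
termination_by G => sizeOf G
decreasing_by
  all_goals
    first
      | exact sizeOf_lt_of_mem_lopts g.2
      | exact sizeOf_lt_of_mem_ropts g.2

def lmax : List ℤ → ℤ
  | [] => 0
  | x :: xs => xs.foldl max x

def lmin : List ℤ → ℤ
  | [] => 0
  | x :: xs => xs.foldl min x

/-- The pair (left outcome, right outcome). -/
def out : WT → ℤ × ℤ
  | int n => (n, n)
  | node L R =>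
    (lmax ((WT.node L R).lopts.attach.map fun g => (out g.1).2),
     lmin ((WT.node L R).ropts.attach.map fun g => (out g.1).1))
termination_by G => sizeOf G
decreasing_by
  all_goals
    first
      | exact sizeOf_lt_of_mem_lopts g.2
      | exact sizeOf_lt_of_mem_ropts g.2

/-- Left outcome L(G): optimal score when Left moves first. -/
def Lout (G : WT) : ℤ := G.out.1

/-- Right outcome R(G): optimal score when Right moves first. -/
def Rout (G : WT) : ℤ := G.out.2

/-- `IsWT G p` : `G` is a well-tempered game of parity `p`
(`false` = even-tempered, `true` = odd-tempered). -/
inductive IsWT : WT → Bool → Prop where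
  | int (n : ℤ) : IsWT (WT.int n) false
  | node {L R : List WT} {p : Bool} (hL : L ≠ []) (hR : R ≠ [])
      (hLp : ∀ g ∈ L, IsWT g p) (hRp : ∀ g ∈ R, IsWT g p) :
      IsWT (WT.node L R) (!p)

/-- `G` is a well-tempered game (of some parity). -/
def Wt (G : WT) : Prop := ∃ p, IsWT G p

/-- Parity, computed structurally (`false` = even-tempered, `true` = odd-tempered;
agrees with `IsWT` on well-tempered games). -/
def par : WT → Bool
  | int _ => false
  | node [] _ => true
  | node (g :: _) _ => !(par g)

/-- Final score under optimal play when Left moves last. -/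
def Lf (G : WT) : ℤ := if G.par then G.Lout else G.Rout

/-- Final score under optimal play when Right moves last. -/
def Rf (G : WT) : ℤ := if G.par then G.Rout else G.Lout

/-- `G ≲ H` : for every well-tempered `X`, `L(G+X) ≤ L(H+X)` and `R(G+X) ≤ R(H+X)`. -/
def Le (G H : WT) : Prop :=
  ∀ X : WT, X.Wt → (G.add X).Lout ≤ (H.add X).Lout ∧ (G.add X).Rout ≤ (H.add X).Rout

/-- `G ≳ H`. -/
def Ge (G H : WT) : Prop := Le H G

/-- `G ≈ H` : equivalence of scoring games. -/
def Equiv (G H : WT) : Prop :=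
  ∀ X : WT, X.Wt → (G.add X).Lout = (H.add X).Lout ∧ (G.add X).Rout = (H.add X).Rout

/-- `G` and `H` are well-tempered with the same parity. -/
def SamePar (G H : WT) : Prop := ∃ p, IsWT G p ∧ IsWT H p

/-- `G` takes values in `S`: every integer subgame lies in `S`. -/
inductive Valued (S : Set ℤ) : WT → Prop where
  | int {n : ℤ} : n ∈ S → Valued S (WT.int n)
  | node {L R : List WT} : (∀ g ∈ L, Valued S g) → (∀ g ∈ R, Valued S g) →
      Valued S (WT.node L R)

/-- `Subgame H G` : `H` is a subgame of `G`. -/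
inductive Subgame : WT → WT → Prop where
  | refl (G : WT) : Subgame G G
  | left {H G' : WT} {L R : List WT} : G' ∈ L → Subgame H G' → Subgame H (WT.node L R)
  | right {H G' : WT} {L R : List WT} : G' ∈ R → Subgame H G' → Subgame H (WT.node L R)

/-- `gap G p` : supremum of `R(H) - L(H)` over subgames `H` of `G` of parity `p`
(as an element of `WithBot ℤ`; the supremum of the empty set is `⊥ = -∞`). -/
noncomputable def gap (G : WT) (p : Bool) : WithBot ℤ :=
  sSup {x : WithBot ℤ | ∃ H : WT, Subgame H G ∧ IsWT H p ∧ x = ((H.Rout - H.Lout : ℤ) : WithBot ℤ)}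

/-- Heating by `t`. -/
def heat (t : ℤ) : WT → WT
  | int n => int n
  | node L R =>
    node ((WT.node L R).lopts.attach.map fun g => (WT.int t).add (heat t g.1))
         ((WT.node L R).ropts.attach.map fun g => (WT.int (-t)).add (heat t g.1))
termination_by G => sizeOf G
decreasing_by
  all_goals
    first
      | exact sizeOf_lt_of_mem_lopts g.2
      | exact sizeOf_lt_of_mem_ropts g.2

end WT

/-!
Every subgame of `G + H` is a sum `G' + H'` of subgames of `G` and `H`, with parity the sum of
their parities. So it suffices to bound `R(G' + H') - L(G' + H')` by `gap₀ G' + gap₀ H'` when `G'`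
and `H'` have the same parity, and by `max (gap₁ G') (gap₁ H')` otherwise. Each such bound is the
sum of an upper bound on `R` and a lower bound on `L` of the sum in terms of the outcomes of the
components, e.g. for even `G`, `H`:
  `R(G + H) ≤ R(G) + L(H) + gap₀ H`  and  `R(G) + L(H) ≤ L(G + H) + gap₀ G`.
These comparisons come in four groups of three, and each group is proved by simultaneous
induction on `G + H`: each step follows an optimal first move, which is made in one component,
and applies another inequality of the same group to the resulting position. Bounds on the gaps pass to
options because subgames of options are subgames.
-/

namespace WT

@[simp] theorem lopts_int (n : ℤ) : (int n).lopts = [] := rfl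
@[simp] theorem ropts_int (n : ℤ) : (int n).ropts = [] := rfl
@[simp] theorem lopts_node (L R : List WT) : (node L R).lopts = L := rfl
@[simp] theorem ropts_node (L R : List WT) : (node L R).ropts = R := rfl

theorem lmax_eq_max {l : List ℤ} (h : l ≠ []) : lmax l = l.max h := by
  cases l with
  | nil => contradiction
  | cons x xs => rfl

theorem lmin_eq_min {l : List ℤ} (h : l ≠ []) : lmin l = l.min h := by
  cases l with
  | nil => contradiction
  | cons x xs => rfl

@[simp] theorem Lout_int (n : ℤ) : (int n).Lout = n := by simp [Lout, out]
@[simp] theorem Rout_int (n : ℤ) : (int n).Rout = n := by simp [Rout, out]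

theorem Lout_node (L R : List WT) : (node L R).Lout = lmax (L.map Rout) := by
  simp only [Lout, out, lopts, List.map_attach_eq_pmap, List.pmap_eq_map]
  rfl

theorem Rout_node (L R : List WT) : (node L R).Rout = lmin (R.map Lout) := by
  simp only [Rout, out, ropts, List.map_attach_eq_pmap, List.pmap_eq_map]
  rfl

theorem Rout_le_Lout_of_mem_lopts {G g : WT} (hg : g ∈ G.lopts) : g.Rout ≤ G.Lout := by
  cases G with
  | int n => simp at hg
  | node L R =>
    rw [lopts_node] at hg
    rw [Lout_node, lmax_eq_max (List.ne_nil_of_mem (List.mem_map_of_mem hg))]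
    exact List.le_max_of_mem (List.mem_map_of_mem hg)

theorem Rout_le_Lout_of_mem_ropts {G g : WT} (hg : g ∈ G.ropts) : G.Rout ≤ g.Lout := by
  cases G with
  | int n => simp at hg
  | node L R =>
    rw [ropts_node] at hg
    rw [Rout_node, lmin_eq_min (List.ne_nil_of_mem (List.mem_map_of_mem hg))]
    exact List.min_le_of_mem (List.mem_map_of_mem hg)

theorem exists_mem_lopts_Lout_eq {G : WT} (h : G.lopts ≠ []) :
    ∃ g ∈ G.lopts, G.Lout = g.Rout := by
  cases G with
  | int n => simp at h
  | node L R =>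
    have hne : L.map Rout ≠ [] := by simpa using h
    obtain ⟨g, hg, hgR⟩ := List.mem_map.1 (List.max_mem hne)
    exact ⟨g, hg, by rw [Lout_node, lmax_eq_max hne, hgR]⟩

theorem exists_mem_ropts_Rout_eq {G : WT} (h : G.ropts ≠ []) :
    ∃ g ∈ G.ropts, G.Rout = g.Lout := by
  cases G with
  | int n => simp at h
  | node L R =>
    have hne : R.map Lout ≠ [] := by simpa using h
    obtain ⟨g, hg, hgL⟩ := List.mem_map.1 (List.min_mem hne)
    exact ⟨g, hg, by rw [Rout_node, lmin_eq_min hne, hgL]⟩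

theorem int_add_int (m n : ℤ) : (int m).add (int n) = int (m + n) := by
  rw [add]

theorem lopts_add (G H : WT) :
    (G.add H).lopts = G.lopts.map (·.add H) ++ H.lopts.map G.add := by
  rcases G with m | ⟨L, R⟩ <;> rcases H with n | ⟨L', R'⟩ <;> rw [add] <;> simp

theorem ropts_add (G H : WT) :
    (G.add H).ropts = G.ropts.map (·.add H) ++ H.ropts.map G.add := by
  rcases G with m | ⟨L, R⟩ <;> rcases H with n | ⟨L', R'⟩ <;> rw [add] <;> simp

theorem mem_lopts_add {G H K : WT} :
    K ∈ (G.add H).lopts ↔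
      (∃ g ∈ G.lopts, g.add H = K) ∨ ∃ h ∈ H.lopts, G.add h = K := by
  simp [lopts_add]

theorem mem_ropts_add {G H K : WT} :
    K ∈ (G.add H).ropts ↔
      (∃ g ∈ G.ropts, g.add H = K) ∨ ∃ h ∈ H.ropts, G.add h = K := by
  simp [ropts_add]

theorem lopts_add_ne_nil {G H : WT} :
    (G.add H).lopts ≠ [] ↔ G.lopts ≠ [] ∨ H.lopts ≠ [] := by
  simp [lopts_add, or_iff_not_imp_left]

theorem ropts_add_ne_nil {G H : WT} :
    (G.add H).ropts ≠ [] ↔ G.ropts ≠ [] ∨ H.ropts ≠ [] := by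
  simp [ropts_add, or_iff_not_imp_left]

theorem add_mem_lopts_add_left {G H g : WT} (hg : g ∈ G.lopts) : g.add H ∈ (G.add H).lopts :=
  mem_lopts_add.2 (.inl ⟨g, hg, rfl⟩)

theorem add_mem_lopts_add_right {G H h : WT} (hh : h ∈ H.lopts) : G.add h ∈ (G.add H).lopts :=
  mem_lopts_add.2 (.inr ⟨h, hh, rfl⟩)

theorem add_mem_ropts_add_left {G H g : WT} (hg : g ∈ G.ropts) : g.add H ∈ (G.add H).ropts :=
  mem_ropts_add.2 (.inl ⟨g, hg, rfl⟩)

theorem add_mem_ropts_add_right {G H h : WT} (hh : h ∈ H.ropts) : G.add h ∈ (G.add H).ropts :=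
  mem_ropts_add.2 (.inr ⟨h, hh, rfl⟩)

theorem exists_Lout_add_eq {G H : WT} (hne : (G.add H).lopts ≠ []) :
    (∃ g ∈ G.lopts, (G.add H).Lout = (g.add H).Rout) ∨
      ∃ h ∈ H.lopts, (G.add H).Lout = (G.add h).Rout := by
  obtain ⟨K, hK, hKeq⟩ := exists_mem_lopts_Lout_eq hne
  rcases mem_lopts_add.1 hK with ⟨g, hg, rfl⟩ | ⟨h, hh, rfl⟩
  exacts [.inl ⟨g, hg, hKeq⟩, .inr ⟨h, hh, hKeq⟩]

theorem exists_Rout_add_eq {G H : WT} (hne : (G.add H).ropts ≠ []) :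
    (∃ g ∈ G.ropts, (G.add H).Rout = (g.add H).Lout) ∨
      ∃ h ∈ H.ropts, (G.add H).Rout = (G.add h).Lout := by
  obtain ⟨K, hK, hKeq⟩ := exists_mem_ropts_Rout_eq hne
  rcases mem_ropts_add.1 hK with ⟨g, hg, rfl⟩ | ⟨h, hh, rfl⟩
  exacts [.inl ⟨g, hg, hKeq⟩, .inr ⟨h, hh, hKeq⟩]

namespace IsWT

variable {G g : WT} {p : Bool}

theorem of_mem_lopts (h : IsWT G p) (hg : g ∈ G.lopts) : IsWT g !p := by
  cases h with
  | int => simp at hg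
  | node _ _ hLp _ => simpa using hLp g hg

theorem of_mem_ropts (h : IsWT G p) (hg : g ∈ G.ropts) : IsWT g !p := by
  cases h with
  | int => simp at hg
  | node _ _ _ hRp => simpa using hRp g hg

theorem eq_int_or_options_ne_nil (h : IsWT G p) :
    (∃ n, G = WT.int n ∧ p = false) ∨ G.lopts ≠ [] ∧ G.ropts ≠ [] := by
  cases h with
  | int n => exact .inl ⟨n, rfl, rfl⟩
  | node hL hR _ _ => exact .inr ⟨hL, hR⟩

theorem lopts_ne_nil (h : IsWT G true) : G.lopts ≠ [] := by
  rcases h.eq_int_or_options_ne_nil with ⟨_, _, h⟩ | h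
  exacts [absurd h nofun, h.1]

theorem ropts_ne_nil (h : IsWT G true) : G.ropts ≠ [] := by
  rcases h.eq_int_or_options_ne_nil with ⟨_, _, h⟩ | h
  exacts [absurd h nofun, h.2]

theorem of_options (hL : G.lopts ≠ []) (hR : G.ropts ≠ [])
    (hLp : ∀ g ∈ G.lopts, IsWT g p) (hRp : ∀ g ∈ G.ropts, IsWT g p) : IsWT G !p := by
  cases G with
  | int n => simp at hL
  | node L R => exact node hL hR hLp hRp

theorem unique {q : Bool} (hp : IsWT G p) (hq : IsWT G q) : p = q := by
  induction hp generalizing q with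
  | int n => cases hq; rfl
  | node hL _ _ _ ih _ =>
    cases hq with
    | node _ _ hLq _ =>
      obtain ⟨g, hg⟩ := List.exists_mem_of_ne_nil _ hL
      rw [ih g hg (hLq g hg)]

theorem eq_int_int_or_add_options_ne_nil {H : WT} {q : Bool} (hG : IsWT G p) (hH : IsWT H q) :
    (∃ m n, G = WT.int m ∧ H = WT.int n ∧ p = false ∧ q = false) ∨
      (G.add H).lopts ≠ [] ∧ (G.add H).ropts ≠ [] := by
  rcases hG.eq_int_or_options_ne_nil with ⟨m, rfl, rfl⟩ | ⟨hGL, hGR⟩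
  · rcases hH.eq_int_or_options_ne_nil with ⟨n, rfl, rfl⟩ | ⟨hHL, hHR⟩
    · exact .inl ⟨m, n, rfl, rfl, rfl, rfl⟩
    · exact .inr ⟨lopts_add_ne_nil.2 (.inr hHL), ropts_add_ne_nil.2 (.inr hHR)⟩
  · exact .inr ⟨lopts_add_ne_nil.2 (.inl hGL), ropts_add_ne_nil.2 (.inl hGR)⟩

theorem add {G H : WT} {p q : Bool} (hG : IsWT G p) (hH : IsWT H q) : IsWT (G.add H) (p ^^ q) := by
  rcases hG.eq_int_int_or_add_options_ne_nil hH with ⟨m, n, rfl, rfl, rfl, rfl⟩ | ⟨hL, hR⟩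
  · rw [int_add_int]; exact .int _
  rw [← Bool.not_not (p ^^ q)]
  refine of_options hL hR (fun K hK => ?_) (fun K hK => ?_)
  · rcases mem_lopts_add.1 hK with ⟨g, hg, rfl⟩ | ⟨h, hh, rfl⟩
    · simpa using (hG.of_mem_lopts hg).add hH
    · simpa using hG.add (hH.of_mem_lopts hh)
  · rcases mem_ropts_add.1 hK with ⟨g, hg, rfl⟩ | ⟨h, hh, rfl⟩
    · simpa using (hG.of_mem_ropts hg).add hH
    · simpa using hG.add (hH.of_mem_ropts hh)
termination_by sizeOf G + sizeOf H
decreasing_by all_goals grind [→ sizeOf_lt_of_mem_lopts, → sizeOf_lt_of_mem_ropts]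

end IsWT

theorem int_add_comm (n : ℤ) (G : WT) : (int n).add G = G.add (int n) := by
  cases G with
  | int m => rw [int_add_int, int_add_int, Int.add_comm]
  | node L R =>
    rw [add, add]
    · simp only [lopts_int, lopts_node, ropts_int, ropts_node, List.map_attach_eq_pmap,
        List.pmap_eq_map, List.map_nil, List.nil_append, List.append_nil, node.injEq]
      constructor <;> exact List.map_congr_left fun g _ => int_add_comm n g
    all_goals intros; contradiction
termination_by sizeOf G

theorem outcomes_add_int (n : ℤ) {G : WT} {p : Bool} (h : IsWT G p) :
    (G.add (int n)).Lout = G.Lout + n ∧ (G.add (int n)).Rout = G.Rout + n := by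
  induction h with
  | int m => simp [int_add_int]
  | @node L R _ hL hR _ _ ihL ihR =>
    have mem_lopts {K} :
        K ∈ ((node L R).add (int n)).lopts ↔ ∃ g ∈ L, g.add (int n) = K := by
      simp [mem_lopts_add]
    have mem_ropts {K} :
        K ∈ ((node L R).add (int n)).ropts ↔ ∃ g ∈ R, g.add (int n) = K := by
      simp [mem_ropts_add]
    constructor
    · apply le_antisymm
      · obtain ⟨K, hK, hKeq⟩ := exists_mem_lopts_Lout_eq (G := (node L R).add (int n))
          (by simpa [lopts_add] using hL)
        obtain ⟨g, hg, rfl⟩ := mem_lopts.1 hK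
        have := Rout_le_Lout_of_mem_lopts (G := node L R) hg
        linarith [(ihL g hg).2]
      · obtain ⟨g, hg, hgeq⟩ := exists_mem_lopts_Lout_eq (G := node L R) hL
        rw [hgeq, ← (ihL g hg).2]
        exact Rout_le_Lout_of_mem_lopts (mem_lopts.2 ⟨g, hg, rfl⟩)
    · apply le_antisymm
      · obtain ⟨g, hg, hgeq⟩ := exists_mem_ropts_Rout_eq (G := node L R) hR
        rw [hgeq, ← (ihR g hg).1]
        exact Rout_le_Lout_of_mem_ropts (mem_ropts.2 ⟨g, hg, rfl⟩)
      · obtain ⟨K, hK, hKeq⟩ := exists_mem_ropts_Rout_eq (G := (node L R).add (int n))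
          (by simpa [ropts_add] using hR)
        obtain ⟨g, hg, rfl⟩ := mem_ropts.1 hK
        have := Rout_le_Lout_of_mem_ropts (G := node L R) hg
        linarith [(ihR g hg).1]

theorem Lout_add_int {G : WT} {p : Bool} (h : IsWT G p) (n : ℤ) :
    (G.add (int n)).Lout = G.Lout + n :=
  (outcomes_add_int n h).1

theorem Rout_add_int {G : WT} {p : Bool} (h : IsWT G p) (n : ℤ) :
    (G.add (int n)).Rout = G.Rout + n :=
  (outcomes_add_int n h).2

theorem Rout_int_add {G : WT} {p : Bool} (h : IsWT G p) (n : ℤ) :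
    ((int n).add G).Rout = n + G.Rout := by
  rw [int_add_comm, Rout_add_int h, Int.add_comm]

namespace Subgame

theorem trans {A B C : WT} (hAB : Subgame A B) (hBC : Subgame B C) : Subgame A C := by
  induction hBC with
  | refl => exact hAB
  | left hmem _ ih => exact left hmem ih
  | right hmem _ ih => exact right hmem ih

theorem of_mem_lopts {G g : WT} (hg : g ∈ G.lopts) : Subgame g G := by
  cases G with
  | int n => simp at hg
  | node L R => exact left hg (refl g)

theorem of_mem_ropts {G g : WT} (hg : g ∈ G.ropts) : Subgame g G := by
  cases G with
  | int n => simp at hg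
  | node L R => exact right hg (refl g)

theorem wt {K G : WT} (hK : Subgame K G) (hG : G.Wt) : K.Wt := by
  induction hK with
  | refl => exact hG
  | left hmem _ ih => obtain ⟨p, hp⟩ := hG; exact ih ⟨!p, hp.of_mem_lopts hmem⟩
  | right hmem _ ih => obtain ⟨p, hp⟩ := hG; exact ih ⟨!p, hp.of_mem_ropts hmem⟩

end Subgame

theorem subgame_iff {K G : WT} :
    Subgame K G ↔
      K = G ∨ (∃ g ∈ G.lopts, Subgame K g) ∨ ∃ g ∈ G.ropts, Subgame K g := by
  constructor
  · rintro (_ | ⟨hg, hK⟩ | ⟨hg, hK⟩)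
    exacts [.inl rfl, .inr (.inl ⟨_, hg, hK⟩), .inr (.inr ⟨_, hg, hK⟩)]
  · rintro (rfl | ⟨g, hg, hK⟩ | ⟨g, hg, hK⟩)
    exacts [.refl K, hK.trans (.of_mem_lopts hg), hK.trans (.of_mem_ropts hg)]

theorem finite_setOf_subgame (G : WT) : {K | Subgame K G}.Finite := by
  have hsub : {K | Subgame K G} =
      insert G ((⋃ g ∈ {g | g ∈ G.lopts}, {K | Subgame K g}) ∪
        ⋃ g ∈ {g | g ∈ G.ropts}, {K | Subgame K g}) := by
    ext K
    rw [Set.mem_ofPred_eq, subgame_iff]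
    simp
  rw [hsub]
  refine .insert _ (.union (.biUnion (List.finite_toSet _) fun g hg => ?_)
    (.biUnion (List.finite_toSet _) fun g hg => ?_))
  · exact finite_setOf_subgame g
  · exact finite_setOf_subgame g
termination_by sizeOf G
decreasing_by
  · exact sizeOf_lt_of_mem_lopts hg
  · exact sizeOf_lt_of_mem_ropts hg

theorem Subgame.exists_eq_add {G H K : WT} (hK : Subgame K (G.add H)) :
    ∃ G' H', Subgame G' G ∧ Subgame H' H ∧ K = G'.add H' := by
  rcases subgame_iff.1 hK with rfl | ⟨K', hK', hsub⟩ | ⟨K', hK', hsub⟩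
  · exact ⟨G, H, .refl G, .refl H, rfl⟩
  · rcases mem_lopts_add.1 hK' with ⟨g, hg, rfl⟩ | ⟨h, hh, rfl⟩
    · obtain ⟨G', H', hG', hH', rfl⟩ := hsub.exists_eq_add
      exact ⟨G', H', hG'.trans (.of_mem_lopts hg), hH', rfl⟩
    · obtain ⟨G', H', hG', hH', rfl⟩ := hsub.exists_eq_add
      exact ⟨G', H', hG', hH'.trans (.of_mem_lopts hh), rfl⟩
  · rcases mem_ropts_add.1 hK' with ⟨g, hg, rfl⟩ | ⟨h, hh, rfl⟩
    · obtain ⟨G', H', hG', hH', rfl⟩ := hsub.exists_eq_add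
      exact ⟨G', H', hG'.trans (.of_mem_ropts hg), hH', rfl⟩
    · obtain ⟨G', H', hG', hH', rfl⟩ := hsub.exists_eq_add
      exact ⟨G', H', hG', hH'.trans (.of_mem_ropts hh), rfl⟩
termination_by sizeOf G + sizeOf H
decreasing_by all_goals grind [→ sizeOf_lt_of_mem_lopts, → sizeOf_lt_of_mem_ropts]

theorem IsWT.exists_int_subgame {G : WT} {p : Bool} (h : IsWT G p) :
    ∃ n, Subgame (WT.int n) G := by
  induction h with
  | int n => exact ⟨n, .refl _⟩
  | node hL _ _ _ ih _ =>
    obtain ⟨g, hg⟩ := List.exists_mem_of_ne_nil _ hL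
    obtain ⟨n, hn⟩ := ih g hg
    exact ⟨n, .left hg hn⟩

theorem Rout_sub_Lout_le_gap {K G : WT} {p : Bool} (hK : Subgame K G) (hKp : IsWT K p) :
    ((K.Rout - K.Lout : ℤ) : WithBot ℤ) ≤ G.gap p := by
  have hfin := (finite_setOf_subgame G).image fun K => ((K.Rout - K.Lout : ℤ) : WithBot ℤ)
  refine le_csSup (hfin.bddAbove.mono ?_) ⟨K, hK, hKp, rfl⟩
  rintro _ ⟨K', hK', -, rfl⟩
  exact ⟨K', hK', rfl⟩

theorem gap_le {G : WT} {p : Bool} {x : WithBot ℤ}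
    (h : ∀ K, Subgame K G → IsWT K p → ((K.Rout - K.Lout : ℤ) : WithBot ℤ) ≤ x) :
    G.gap p ≤ x :=
  csSup_le' fun _ ⟨K, hK, hKp, hx⟩ => hx ▸ h K hK hKp

theorem gap_mono {K G : WT} (hK : Subgame K G) (p : Bool) : K.gap p ≤ G.gap p :=
  gap_le fun _ hK' hK'p => Rout_sub_Lout_le_gap (hK'.trans hK) hK'p

theorem gap_ne_bot {K G : WT} {p : Bool} (hK : Subgame K G) (hKp : IsWT K p) : G.gap p ≠ ⊥ :=
  ne_bot_of_le_ne_bot WithBot.coe_ne_bot (Rout_sub_Lout_le_gap hK hKp)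

theorem IsWT.gap_false_ne_bot {G : WT} {p : Bool} (h : IsWT G p) : G.gap false ≠ ⊥ :=
  let ⟨n, hn⟩ := h.exists_int_subgame
  gap_ne_bot hn (.int n)

theorem gap_le_of_mem_lopts {G g : WT} {p : Bool} {x : WithBot ℤ} (hg : g ∈ G.lopts)
    (hx : G.gap p ≤ x) : g.gap p ≤ x :=
  (gap_mono (.of_mem_lopts hg) p).trans hx

theorem gap_le_of_mem_ropts {G g : WT} {p : Bool} {x : WithBot ℤ} (hg : g ∈ G.ropts)
    (hx : G.gap p ≤ x) : g.gap p ≤ x :=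
  (gap_mono (.of_mem_ropts hg) p).trans hx

theorem Rout_sub_Lout_le_of_gap_le {G : WT} {p : Bool} {d : ℤ} (h : IsWT G p)
    (hd : G.gap p ≤ d) :
    G.Rout - G.Lout ≤ d := by
  exact_mod_cast (Rout_sub_Lout_le_gap (.refl G) h).trans hd

mutual

theorem le_Lout_add_even_odd {G H : WT} (hG : IsWT G false) (hH : IsWT H true) :
    G.Rout + H.Lout ≤ (G.add H).Lout := by
  obtain ⟨h, hh, hLH⟩ := exists_mem_lopts_Lout_eq hH.lopts_ne_nil
  have := le_Rout_add_even_even hG (hH.of_mem_lopts hh)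
  have := Rout_le_Lout_of_mem_lopts (add_mem_lopts_add_right (G := G) hh)
  omega
termination_by sizeOf G + sizeOf H
decreasing_by grind [→ sizeOf_lt_of_mem_lopts, → sizeOf_lt_of_mem_ropts]

theorem le_Lout_add_odd_even {G H : WT} (hG : IsWT G true) (hH : IsWT H false) :
    G.Lout + H.Rout ≤ (G.add H).Lout := by
  obtain ⟨g, hg, hLG⟩ := exists_mem_lopts_Lout_eq hG.lopts_ne_nil
  have := le_Rout_add_even_even (hG.of_mem_lopts hg) hH
  have := Rout_le_Lout_of_mem_lopts (add_mem_lopts_add_left (H := H) hg)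
  omega
termination_by sizeOf G + sizeOf H
decreasing_by grind [→ sizeOf_lt_of_mem_lopts, → sizeOf_lt_of_mem_ropts]

theorem le_Rout_add_even_even {G H : WT} (hG : IsWT G false) (hH : IsWT H false) :
    G.Rout + H.Rout ≤ (G.add H).Rout := by
  rcases hG.eq_int_int_or_add_options_ne_nil hH with ⟨m, n, rfl, rfl, -⟩ | ⟨-, hR⟩
  · simp [int_add_int]
  rcases exists_Rout_add_eq hR with ⟨g, hg, hRGH⟩ | ⟨h, hh, hRGH⟩
  · have := le_Lout_add_odd_even (hG.of_mem_ropts hg) hH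
    have := Rout_le_Lout_of_mem_ropts hg
    omega
  · have := le_Lout_add_even_odd hG (hH.of_mem_ropts hh)
    have := Rout_le_Lout_of_mem_ropts hh
    omega
termination_by sizeOf G + sizeOf H
decreasing_by all_goals grind [→ sizeOf_lt_of_mem_lopts, → sizeOf_lt_of_mem_ropts]

end

mutual

theorem Rout_add_le_odd_odd {G H : WT} {d : ℤ} (hG : IsWT G true) (hH : IsWT H true)
    (hd : H.gap false ≤ d) : (G.add H).Rout ≤ G.Lout + H.Rout + d := by
  obtain ⟨h, hh, hRH⟩ := exists_mem_ropts_Rout_eq hH.ropts_ne_nil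
  have := Lout_add_le_odd_even hG (hH.of_mem_ropts hh) (gap_le_of_mem_ropts hh hd)
  have := Rout_le_Lout_of_mem_ropts (add_mem_ropts_add_right (G := G) hh)
  omega
termination_by sizeOf G + sizeOf H
decreasing_by grind [→ sizeOf_lt_of_mem_lopts, → sizeOf_lt_of_mem_ropts]

theorem Rout_add_le_even_even {G H : WT} {d : ℤ} (hG : IsWT G false) (hH : IsWT H false)
    (hd : H.gap false ≤ d) : (G.add H).Rout ≤ G.Rout + H.Lout + d := by
  rcases hG.eq_int_or_options_ne_nil with ⟨m, rfl, -⟩ | ⟨-, hGR⟩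
  · have := Rout_sub_Lout_le_of_gap_le hH hd
    rw [Rout_int_add hH, Rout_int]
    omega
  obtain ⟨g, hg, hRG⟩ := exists_mem_ropts_Rout_eq hGR
  have := Lout_add_le_odd_even (hG.of_mem_ropts hg) hH hd
  have := Rout_le_Lout_of_mem_ropts (add_mem_ropts_add_left (H := H) hg)
  omega
termination_by sizeOf G + sizeOf H
decreasing_by grind [→ sizeOf_lt_of_mem_lopts, → sizeOf_lt_of_mem_ropts]

theorem Lout_add_le_odd_even {G H : WT} {d : ℤ} (hG : IsWT G true) (hH : IsWT H false)
    (hd : H.gap false ≤ d) : (G.add H).Lout ≤ G.Lout + H.Lout + d := by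
  rcases exists_Lout_add_eq (H := H) (lopts_add_ne_nil.2 (.inl hG.lopts_ne_nil)) with
    ⟨g, hg, hLGH⟩ | ⟨h, hh, hLGH⟩
  · have := Rout_add_le_even_even (hG.of_mem_lopts hg) hH hd
    have := Rout_le_Lout_of_mem_lopts hg
    omega
  · have := Rout_add_le_odd_odd hG (hH.of_mem_lopts hh) (gap_le_of_mem_lopts hh hd)
    have := Rout_le_Lout_of_mem_lopts hh
    omega
termination_by sizeOf G + sizeOf H
decreasing_by all_goals grind [→ sizeOf_lt_of_mem_lopts, → sizeOf_lt_of_mem_ropts]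

end

mutual

theorem le_Lout_add_odd_odd {G H : WT} {d : ℤ} (hG : IsWT G true) (hH : IsWT H true)
    (hd : G.gap false ≤ d) : G.Lout + H.Rout ≤ (G.add H).Lout + d := by
  obtain ⟨g, hg, hLG⟩ := exists_mem_lopts_Lout_eq hG.lopts_ne_nil
  have := le_Rout_add_even_odd (hG.of_mem_lopts hg) hH (gap_le_of_mem_lopts hg hd)
  have := Rout_le_Lout_of_mem_lopts (add_mem_lopts_add_left (H := H) hg)
  omega
termination_by sizeOf G + sizeOf H
decreasing_by grind [→ sizeOf_lt_of_mem_lopts, → sizeOf_lt_of_mem_ropts]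

theorem le_Lout_add_even_even {G H : WT} {d : ℤ} (hG : IsWT G false) (hH : IsWT H false)
    (hd : G.gap false ≤ d) : G.Rout + H.Lout ≤ (G.add H).Lout + d := by
  rcases hH.eq_int_or_options_ne_nil with ⟨m, rfl, -⟩ | ⟨hHL, -⟩
  · have := Rout_sub_Lout_le_of_gap_le hG hd
    rw [Lout_add_int hG, Lout_int]
    omega
  obtain ⟨h, hh, hLH⟩ := exists_mem_lopts_Lout_eq hHL
  have := le_Rout_add_even_odd hG (hH.of_mem_lopts hh) hd
  have := Rout_le_Lout_of_mem_lopts (add_mem_lopts_add_right (G := G) hh)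
  omega
termination_by sizeOf G + sizeOf H
decreasing_by grind [→ sizeOf_lt_of_mem_lopts, → sizeOf_lt_of_mem_ropts]

theorem le_Rout_add_even_odd {G H : WT} {d : ℤ} (hG : IsWT G false) (hH : IsWT H true)
    (hd : G.gap false ≤ d) : G.Rout + H.Rout ≤ (G.add H).Rout + d := by
  rcases exists_Rout_add_eq (G := G) (ropts_add_ne_nil.2 (.inr hH.ropts_ne_nil)) with
    ⟨g, hg, hRGH⟩ | ⟨h, hh, hRGH⟩
  · have := le_Lout_add_odd_odd (hG.of_mem_ropts hg) hH (gap_le_of_mem_ropts hg hd)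
    have := Rout_le_Lout_of_mem_ropts hg
    omega
  · have := le_Lout_add_even_even hG (hH.of_mem_ropts hh) hd
    have := Rout_le_Lout_of_mem_ropts hh
    omega
termination_by sizeOf G + sizeOf H
decreasing_by all_goals grind [→ sizeOf_lt_of_mem_lopts, → sizeOf_lt_of_mem_ropts]

end

mutual

theorem Rout_add_le_even_odd {G H : WT} {d : ℤ} (hG : IsWT G false) (hH : IsWT H true)
    (hdG : G.gap true ≤ d) (hdH : H.gap true ≤ d) : (G.add H).Rout ≤ G.Rout + H.Lout + d := by
  rcases hG.eq_int_or_options_ne_nil with ⟨m, rfl, -⟩ | ⟨-, hGR⟩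
  · have := Rout_sub_Lout_le_of_gap_le hH hdH
    rw [Rout_int_add hH, Rout_int]
    omega
  obtain ⟨g, hg, hRG⟩ := exists_mem_ropts_Rout_eq hGR
  have := Lout_add_le_odd_odd (hG.of_mem_ropts hg) hH (gap_le_of_mem_ropts hg hdG) hdH
  have := Rout_le_Lout_of_mem_ropts (add_mem_ropts_add_left (H := H) hg)
  omega
termination_by sizeOf G + sizeOf H
decreasing_by grind [→ sizeOf_lt_of_mem_lopts, → sizeOf_lt_of_mem_ropts]

theorem Rout_add_le_odd_even {G H : WT} {d : ℤ} (hG : IsWT G true) (hH : IsWT H false)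
    (hdG : G.gap true ≤ d) (hdH : H.gap true ≤ d) : (G.add H).Rout ≤ G.Lout + H.Rout + d := by
  rcases hH.eq_int_or_options_ne_nil with ⟨m, rfl, -⟩ | ⟨-, hHR⟩
  · have := Rout_sub_Lout_le_of_gap_le hG hdG
    rw [Rout_add_int hG, Rout_int]
    omega
  obtain ⟨h, hh, hRH⟩ := exists_mem_ropts_Rout_eq hHR
  have := Lout_add_le_odd_odd hG (hH.of_mem_ropts hh) hdG (gap_le_of_mem_ropts hh hdH)
  have := Rout_le_Lout_of_mem_ropts (add_mem_ropts_add_right (G := G) hh)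
  omega
termination_by sizeOf G + sizeOf H
decreasing_by grind [→ sizeOf_lt_of_mem_lopts, → sizeOf_lt_of_mem_ropts]

theorem Lout_add_le_odd_odd {G H : WT} {d : ℤ} (hG : IsWT G true) (hH : IsWT H true)
    (hdG : G.gap true ≤ d) (hdH : H.gap true ≤ d) : (G.add H).Lout ≤ G.Lout + H.Lout + d := by
  rcases exists_Lout_add_eq (H := H) (lopts_add_ne_nil.2 (.inl hG.lopts_ne_nil)) with
    ⟨g, hg, hLGH⟩ | ⟨h, hh, hLGH⟩
  · have := Rout_add_le_even_odd (hG.of_mem_lopts hg) hH (gap_le_of_mem_lopts hg hdG) hdH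
    have := Rout_le_Lout_of_mem_lopts hg
    omega
  · have := Rout_add_le_odd_even hG (hH.of_mem_lopts hh) hdG (gap_le_of_mem_lopts hh hdH)
    have := Rout_le_Lout_of_mem_lopts hh
    omega
termination_by sizeOf G + sizeOf H
decreasing_by all_goals grind [→ sizeOf_lt_of_mem_lopts, → sizeOf_lt_of_mem_ropts]

end

theorem Rout_sub_Lout_add_le_of_same_parity {G H : WT} {p : Bool} {a b : ℤ}
    (hG : IsWT G p) (hH : IsWT H p) (ha : G.gap false ≤ a) (hb : H.gap false ≤ b) :
    (G.add H).Rout - (G.add H).Lout ≤ a + b := by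
  cases p
  · have := Rout_add_le_even_even hG hH hb
    have := le_Lout_add_even_even hG hH ha
    omega
  · have := Rout_add_le_odd_odd hG hH hb
    have := le_Lout_add_odd_odd hG hH ha
    omega

theorem Rout_sub_Lout_add_le_of_opposite_parity {G H : WT} {p : Bool} {d : ℤ}
    (hG : IsWT G p) (hH : IsWT H !p) (hdG : G.gap true ≤ d) (hdH : H.gap true ≤ d) :
    (G.add H).Rout - (G.add H).Lout ≤ d := by
  cases p
  · have := Rout_add_le_even_odd hG hH hdG hdH
    have := le_Lout_add_even_odd hG hH
    omega
  · have := Rout_add_le_odd_even hG hH hdG hdH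
    have := le_Lout_add_odd_even hG hH
    omega

theorem gap_false_add_le {G H : WT} (hG : G.Wt) (hH : H.Wt) :
    (G.add H).gap false ≤ G.gap false + H.gap false := by
  refine gap_le fun K hK hKp => ?_
  obtain ⟨G', H', hG', hH', rfl⟩ := hK.exists_eq_add
  obtain ⟨p, hpG⟩ := hG'.wt hG
  obtain ⟨q, hqH⟩ := hH'.wt hH
  obtain rfl : p = q := by simpa using (hpG.add hqH).unique hKp
  obtain ⟨a, ha⟩ := WithBot.ne_bot_iff_exists.1 hpG.gap_false_ne_bot
  obtain ⟨b, hb⟩ := WithBot.ne_bot_iff_exists.1 hqH.gap_false_ne_bot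
  calc (((G'.add H').Rout - (G'.add H').Lout : ℤ) : WithBot ℤ)
      ≤ ((a + b : ℤ) : WithBot ℤ) :=
        WithBot.coe_le_coe.2 (Rout_sub_Lout_add_le_of_same_parity hpG hqH ha.ge hb.ge)
    _ = G'.gap false + H'.gap false := by rw [WithBot.coe_add, ha, hb]
    _ ≤ G.gap false + H.gap false := add_le_add (gap_mono hG' _) (gap_mono hH' _)

theorem gap_true_add_le {G H : WT} (hG : G.Wt) (hH : H.Wt) :
    (G.add H).gap true ≤ max (G.gap true) (H.gap true) := by
  refine gap_le fun K hK hKp => ?_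
  obtain ⟨G', H', hG', hH', rfl⟩ := hK.exists_eq_add
  obtain ⟨p, hpG⟩ := hG'.wt hG
  obtain ⟨q, hqH⟩ := hH'.wt hH
  obtain rfl : q = !p := Bool.eq_not.2 fun h => by simpa [h] using (hpG.add hqH).unique hKp
  have hne : max (G'.gap true) (H'.gap true) ≠ ⊥ := by
    cases p
    · exact ne_bot_of_le_ne_bot (gap_ne_bot (.refl H') hqH) (le_max_right _ _)
    · exact ne_bot_of_le_ne_bot (gap_ne_bot (.refl G') hpG) (le_max_left _ _)
  obtain ⟨d, hd⟩ := WithBot.ne_bot_iff_exists.1 hne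
  have hdG : G'.gap true ≤ d := hd ▸ le_max_left _ _
  have hdH : H'.gap true ≤ d := hd ▸ le_max_right _ _
  calc (((G'.add H').Rout - (G'.add H').Lout : ℤ) : WithBot ℤ)
      ≤ d := WithBot.coe_le_coe.2 (Rout_sub_Lout_add_le_of_opposite_parity hpG hqH hdG hdH)
    _ = max (G'.gap true) (H'.gap true) := hd
    _ ≤ max (G.gap true) (H.gap true) := max_le_max (gap_mono hG' _) (gap_mono hH' _)

end WT

/-- gap₀(G+H) ≤ gap₀(G) + gap₀(H) and gap₁(G+H) ≤ max(gap₁(G), gap₁(H)). -/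
theorem gap_add (G H : WT) (hG : G.Wt) (hH : H.Wt) :
    (G.add H).gap false ≤ G.gap false + H.gap false ∧
    (G.add H).gap true ≤ max (G.gap true) (H.gap true) :=
  ⟨WT.gap_false_add_le hG hH, WT.gap_true_add_le hG hH⟩
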